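/- arXiv:2105.09625 — 4 statements merged into one kernel-verified Lean document; each statement's English description precedes it below -/
import Mathlib

section
/- Let X = (X₁,…,X_p) be a random vector whose dependency structure follows a graph G on {1,…,p} (collections of coordinates indexed by non-adjacent vertex sets are independent), with all coordinates having finite fourth moments and mean zero. If i, j, k, l satisfy d_G(i,j) > 2 and d_G(k,l) > 2, then Cov(XᵢXⱼ, XₖXₗ) = E[XᵢXₖ]E[XⱼXₗ] + E[XᵢXₗ]E[XⱼXₖ]. -/
open MeasureTheory ProbabilityTheory Matrix Filter
open scoped BigOperators

noncomputable def specNorm {p : ℕ} (A : Matrix (Fin p) (Fin p) ℝ) : ℝ :=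
  ‖Matrix.toEuclideanCLM (𝕜 := ℝ) A‖

/-- Two vertex sets are adjacent if some `i ∈ I`, `j ∈ J` satisfy `i = j` or `i ~ j`. -/
def SetsAdj {V : Type*} (G : SimpleGraph V) (I J : Set V) : Prop :=
  ∃ i ∈ I, ∃ j ∈ J, i = j ∨ G.Adj i j

/-- The graph-dependent model: coordinates indexed by non-adjacent vertex sets are independent. -/
def GraphDependent {Ω : Type*} [MeasurableSpace Ω] (P : Measure Ω) {p : ℕ}
    (G : SimpleGraph (Fin p)) (X : Fin p → Ω → ℝ) : Prop :=
  ∀ I J : Set (Fin p), ¬ SetsAdj G I J →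
    IndepFun (fun ω (i : I) => X i ω) (fun ω (j : J) => X j ω) P

/-- `𝒱` is a d-dominating set for `G`. -/
def IsDomSet {p : ℕ} (G : SimpleGraph (Fin p)) (d : ℕ) (𝒱 : Set (Fin p)) : Prop :=
  (∀ u, u ∉ 𝒱 → ∃ v ∈ 𝒱, G.Adj u v) ∧
  ∀ u, {v ∈ 𝒱 | G.edist u v ≤ 3}.ncard ≤ d

/-- A centered Gaussian random vector with covariance matrix `S`:
every linear functional is centered Gaussian with the appropriate variance. -/
def IsCenteredGaussianVec {Ω : Type*} [MeasurableSpace Ω] (P : Measure Ω) {p : ℕ}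
    (z : Ω → Fin p → ℝ) (S : Matrix (Fin p) (Fin p) ℝ) : Prop :=
  ∀ a : Fin p → ℝ,
    Measure.map (fun ω => a ⬝ᵥ z ω) P = gaussianReal 0 (a ⬝ᵥ S.mulVec a).toNNReal

/-!
Centering and independence of non-adjacent coordinates kill `E[XᵢXⱼ]` and `E[XₖXₗ]`. Since no
vertex is within distance one of both ends of a pair at distance greater than two, either
`{i, k}` and `{j, l}` are non-adjacent, and then `E[XᵢXₗ] = 0` while the fourth moment factors as
`E[XᵢXₖ] E[XⱼXₗ]`, or else `{i, l}` and `{j, k}` are non-adjacent and the roles of `k` and `l`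
swap.
-/

section SetsAdj

variable {V : Type*} {G : SimpleGraph V}

theorem setsAdj_iff_exists_edist_le_one {I J : Set V} :
    SetsAdj G I J ↔ ∃ i ∈ I, ∃ j ∈ J, G.edist i j ≤ 1 := by
  simp only [SetsAdj, SimpleGraph.edist_le_one_iff_adj_or_eq, or_comm]

theorem not_setsAdj_singleton_iff {a b : V} : ¬ SetsAdj G {a} {b} ↔ 1 < G.edist a b := by
  simp [setsAdj_iff_exists_edist_le_one]

theorem not_setsAdj_pair_iff {a b c d : V} :
    ¬ SetsAdj G {a, b} {c, d} ↔ 1 < G.edist a c ∧ 1 < G.edist a d ∧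
      1 < G.edist b c ∧ 1 < G.edist b d := by
  simp [setsAdj_iff_exists_edist_le_one, and_assoc]

end SetsAdj

theorem SimpleGraph.one_lt_edist_of_two_lt_edist {V : Type*} {G : SimpleGraph V} {a b c : V}
    (hab : 2 < G.edist a b) (hca : G.edist c a ≤ 1) : 1 < G.edist c b := by
  by_contra! hcb
  have : G.edist a b ≤ 2 :=
    calc G.edist a b ≤ G.edist a c + G.edist c b := G.edist_triangle
      _ ≤ 1 + 1 := add_le_add (G.edist_comm ▸ hca) hcb
      _ = 2 := by norm_num
  exact this.not_gt hab

theorem SimpleGraph.one_lt_edist_of_two_lt_edist_of_near {V : Type*} {G : SimpleGraph V}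
    {i j k l : V} (hij : 2 < G.edist i j) (hkl : 2 < G.edist k l)
    (hnear : G.edist i l ≤ 1 ∨ G.edist k j ≤ 1) : 1 < G.edist i k ∧ 1 < G.edist l j := by
  rcases hnear with hil | hkj
  · exact ⟨G.one_lt_edist_of_two_lt_edist (G.edist_comm ▸ hkl) hil,
      G.one_lt_edist_of_two_lt_edist hij (G.edist_comm ▸ hil)⟩
  · rw [G.edist_comm (u := i), G.edist_comm (u := l)]
    exact ⟨G.one_lt_edist_of_two_lt_edist (G.edist_comm ▸ hij) hkj,
      G.one_lt_edist_of_two_lt_edist hkl (G.edist_comm ▸ hkj)⟩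

namespace GraphDependent

variable {Ω : Type*} [MeasurableSpace Ω] {P : Measure Ω} {p : ℕ} {G : SimpleGraph (Fin p)}
  {X : Fin p → Ω → ℝ}

theorem indepFun (hdep : GraphDependent P G X) {a b : Fin p} (hab : ¬ SetsAdj G {a} {b}) :
    IndepFun (X a) (X b) P :=
  (hdep {a} {b} hab).comp (φ := fun v : ({a} : Set (Fin p)) → ℝ => v ⟨a, rfl⟩)
    (ψ := fun v : ({b} : Set (Fin p)) → ℝ => v ⟨b, rfl⟩) (by fun_prop) (by fun_prop)

theorem indepFun_mul_mul (hdep : GraphDependent P G X) {a b c d : Fin p}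
    (h : ¬ SetsAdj G {a, b} {c, d}) :
    IndepFun (fun ω => X a ω * X b ω) (fun ω => X c ω * X d ω) P :=
  (hdep {a, b} {c, d} h).comp
    (φ := fun v : ({a, b} : Set (Fin p)) → ℝ => v ⟨a, .inl rfl⟩ * v ⟨b, .inr rfl⟩)
    (ψ := fun v : ({c, d} : Set (Fin p)) → ℝ => v ⟨c, .inl rfl⟩ * v ⟨d, .inr rfl⟩)
    (by fun_prop) (by fun_prop)

variable (hdep : GraphDependent P G X) (hmeas : ∀ i, Measurable (X i))
include hdep hmeas

theorem integral_mul_eq_zero (h0 : ∀ i, ∫ ω, X i ω ∂P = 0) {a b : Fin p}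
    (hab : ¬ SetsAdj G {a} {b}) : ∫ ω, X a ω * X b ω ∂P = 0 := by
  rw [(hdep.indepFun hab).integral_fun_mul_eq_mul_integral (hmeas a).aestronglyMeasurable
    (hmeas b).aestronglyMeasurable, h0 a, zero_mul]

theorem integral_mul_mul_eq {a b c d : Fin p} (h : ¬ SetsAdj G {a, b} {c, d}) :
    ∫ ω, (X a ω * X b ω) * (X c ω * X d ω) ∂P
      = (∫ ω, X a ω * X b ω ∂P) * ∫ ω, X c ω * X d ω ∂P :=
  (hdep.indepFun_mul_mul h).integral_fun_mul_eq_mul_integral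
    ((hmeas a).mul (hmeas b)).aestronglyMeasurable ((hmeas c).mul (hmeas d)).aestronglyMeasurable

end GraphDependent

theorem stmt5_general {Ω : Type*} [MeasurableSpace Ω] (P : Measure Ω)
    {p : ℕ} (G : SimpleGraph (Fin p)) (X : Fin p → Ω → ℝ)
    (hdep : GraphDependent P G X)
    (hmeas : ∀ i, Measurable (X i))
    (h0 : ∀ i, ∫ ω, X i ω ∂P = 0)
    (i j k l : Fin p) (hij : 2 < G.edist i j) (hkl : 2 < G.edist k l) :
    ∫ ω, (X i ω * X j ω) * (X k ω * X l ω) ∂P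
        - (∫ ω, X i ω * X j ω ∂P) * ∫ ω, X k ω * X l ω ∂P
      = (∫ ω, X i ω * X k ω ∂P) * (∫ ω, X j ω * X l ω ∂P)
        + (∫ ω, X i ω * X l ω ∂P) * (∫ ω, X j ω * X k ω ∂P) := by
  have hij' : 1 < G.edist i j := lt_trans (by norm_num) hij
  have hkl' : 1 < G.edist k l := lt_trans (by norm_num) hkl
  rw [hdep.integral_mul_eq_zero hmeas h0 (not_setsAdj_singleton_iff.2 hij'),
    hdep.integral_mul_eq_zero hmeas h0 (not_setsAdj_singleton_iff.2 hkl'), zero_mul, sub_zero]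
  by_cases hnear : G.edist i l ≤ 1 ∨ G.edist k j ≤ 1
  · obtain ⟨hik, hlj⟩ := G.one_lt_edist_of_two_lt_edist_of_near hij hkl hnear
    have hpair := hdep.integral_mul_mul_eq hmeas
      (not_setsAdj_pair_iff.2 ⟨hij', hik, hlj, G.edist_comm ▸ hkl'⟩)
    rw [hdep.integral_mul_eq_zero hmeas h0 (not_setsAdj_singleton_iff.2 hik), zero_mul, zero_add,
      ← hpair]
    congr 1 with ω
    ring
  · obtain ⟨hil, hkj⟩ : 1 < G.edist i l ∧ 1 < G.edist k j := by simpa using hnear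
    have hpair := hdep.integral_mul_mul_eq hmeas (not_setsAdj_pair_iff.2 ⟨hij', hil, hkj, hkl'⟩)
    rw [hdep.integral_mul_eq_zero hmeas h0 (not_setsAdj_singleton_iff.2 hil), zero_mul, add_zero,
      ← hpair]
    congr 1 with ω
    ring

theorem stmt5 {Ω : Type*} [MeasurableSpace Ω] (P : Measure Ω) [IsProbabilityMeasure P]
    {p : ℕ} (G : SimpleGraph (Fin p)) (X : Fin p → Ω → ℝ)
    (hdep : GraphDependent P G X)
    (hmeas : ∀ i, Measurable (X i))
    (h4 : ∀ i, MemLp (X i) 4 P)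
    (h0 : ∀ i, ∫ ω, X i ω ∂P = 0)
    (i j k l : Fin p) (hij : 2 < G.edist i j) (hkl : 2 < G.edist k l) :
    ∫ ω, (X i ω * X j ω) * (X k ω * X l ω) ∂P
        - (∫ ω, X i ω * X j ω ∂P) * ∫ ω, X k ω * X l ω ∂P
      = (∫ ω, X i ω * X k ω ∂P) * (∫ ω, X j ω * X l ω ∂P)
        + (∫ ω, X i ω * X l ω ∂P) * (∫ ω, X j ω * X k ω ∂P) :=
  stmt5_general P G X hdep hmeas h0 i j k l hij hkl
end

section
/- Let X = (X₁,…,X_p) be a mean-zero random vector with covariance Σ following the graph-dependent model with graph G of maximum degree Δ. Then tr(Σ²) ≤ (Δ+1)·∑_{i=1}^p E[Xᵢ⁴]. -/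
open MeasureTheory ProbabilityTheory Matrix Filter
open scoped BigOperators

/-!
Independence of non-adjacent coordinates kills every entry `Σᵢⱼ` with `j` outside the closed
neighbourhood of `i`, so `tr(Σ²) = ∑ᵢⱼ Σᵢⱼ²` has at most `Δ + 1` nonzero terms per row. Each of
them is at most `(E Xᵢ⁴ + E Xⱼ⁴) / 2`, by Jensen and AM-GM: `(E[XᵢXⱼ])² ≤ E[Xᵢ²Xⱼ²]`.
-/

namespace MeasureTheory

variable {Ω : Type*} [MeasurableSpace Ω] {μ : Measure Ω}

lemma MemLp.integrable_pow_four {X : Ω → ℝ} (hX : MemLp X 4 μ) :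
    Integrable (fun ω => X ω ^ 4) μ := by
  simpa [Even.pow_abs (by decide : Even 4)] using hX.integrable_norm_pow (p := 4) (by norm_num)

lemma MemLp.mul_of_four {X Y : Ω → ℝ} (hX : MemLp X 4 μ) (hY : MemLp Y 4 μ) :
    MemLp (X * Y) 2 μ :=
  have : ENNReal.HolderTriple 4 4 2 :=
    ⟨by rw [← ENNReal.toReal_eq_toReal_iff' (by simp) (by simp)]; norm_num [ENNReal.toReal_add]⟩
  hY.mul hX

lemma sq_integral_le_integral_sq [IsProbabilityMeasure μ] {Z : Ω → ℝ} (hZ : MemLp Z 2 μ) :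
    (∫ ω, Z ω ∂μ) ^ 2 ≤ ∫ ω, Z ω ^ 2 ∂μ := by
  have := variance_nonneg Z μ
  rw [variance_eq_sub hZ] at this
  simpa [sub_nonneg] using this

lemma sq_integral_mul_le_of_memLp_four [IsProbabilityMeasure μ] {X Y : Ω → ℝ}
    (hX : MemLp X 4 μ) (hY : MemLp Y 4 μ) :
    (∫ ω, X ω * Y ω ∂μ) ^ 2 ≤ (∫ ω, X ω ^ 4 ∂μ + ∫ ω, Y ω ^ 4 ∂μ) / 2 := by
  have hXY := hX.mul_of_four hY
  calc (∫ ω, X ω * Y ω ∂μ) ^ 2 ≤ ∫ ω, (X ω * Y ω) ^ 2 ∂μ := sq_integral_le_integral_sq hXY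
    _ ≤ ∫ ω, (X ω ^ 4 + Y ω ^ 4) / 2 ∂μ :=
      integral_mono hXY.integrable_sq
        ((hX.integrable_pow_four.add hY.integrable_pow_four).div_const 2)
        fun ω => by nlinarith [sq_nonneg (X ω ^ 2 - Y ω ^ 2)]
    _ = (∫ ω, X ω ^ 4 ∂μ + ∫ ω, Y ω ^ 4 ∂μ) / 2 := by
      rw [integral_div, integral_add hX.integrable_pow_four hY.integrable_pow_four]

end MeasureTheory

lemma GraphDependent.indepFun_s7 {Ω : Type*} [MeasurableSpace Ω] {P : Measure Ω} {p : ℕ}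
    {G : SimpleGraph (Fin p)} {X : Fin p → Ω → ℝ} (hdep : GraphDependent P G X) {i j : Fin p}
    (hij : ¬(i = j ∨ G.Adj i j)) : IndepFun (X i) (X j) P :=
  (hdep {i} {j} (by simpa [SetsAdj] using hij)).comp
    (φ := fun f : ({i} : Set (Fin p)) → ℝ => f ⟨i, rfl⟩)
    (ψ := fun f : ({j} : Set (Fin p)) → ℝ => f ⟨j, rfl⟩)
    (measurable_pi_apply _) (measurable_pi_apply _)

lemma SimpleGraph.sum_sum_closedNeighborhood_le {V : Type*} [Fintype V] [DecidableEq V]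
    (G : SimpleGraph V) [DecidableRel G.Adj] {Δ : ℕ} (hΔ : ∀ v, G.degree v ≤ Δ)
    {f : V → ℝ} (hf : ∀ v, 0 ≤ f v) :
    ∑ i, ∑ j ∈ insert i (G.neighborFinset i), (f i + f j) / 2 ≤ (Δ + 1) * ∑ i, f i := by
  have hswap : ∑ i, ∑ j ∈ insert i (G.neighborFinset i), f j
      = ∑ i, ∑ j ∈ insert i (G.neighborFinset i), f i :=
    Finset.sum_comm' (by simp [eq_comm, G.adj_comm])
  calc ∑ i, ∑ j ∈ insert i (G.neighborFinset i), (f i + f j) / 2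
      = ∑ i, (G.degree i + 1 : ℝ) * f i := by
        simp only [← Finset.sum_div, Finset.sum_add_distrib, hswap, Finset.sum_const,
          nsmul_eq_mul, Finset.card_insert_of_notMem (G.notMem_neighborFinset_self _),
          SimpleGraph.card_neighborFinset_eq_degree]
        push_cast
        ring
    _ ≤ ∑ i, (Δ + 1 : ℝ) * f i := by
        gcongr with i
        · exact hf i
        · exact_mod_cast hΔ i
    _ = (Δ + 1) * ∑ i, f i := (Finset.mul_sum ..).symm

theorem stmt7_general {Ω : Type*} [MeasurableSpace Ω] (P : Measure Ω) [IsProbabilityMeasure P]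
    {p : ℕ} (G : SimpleGraph (Fin p)) [DecidableRel G.Adj] (X : Fin p → Ω → ℝ)
    (hdep : GraphDependent P G X)
    (h4 : ∀ i, MemLp (X i) 4 P)
    (h0 : ∀ i, ∫ ω, X i ω ∂P = 0)
    (S : Matrix (Fin p) (Fin p) ℝ)
    (hS : ∀ i j, S i j = ∫ ω, X i ω * X j ω ∂P)
    (Δ : ℕ) (hΔ : ∀ v, G.degree v ≤ Δ) :
    Matrix.trace (S ^ 2) ≤ ((Δ : ℝ) + 1) * ∑ i, ∫ ω, X i ω ^ 4 ∂P := by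
  have hsymm : ∀ i j, S j i = S i j := fun i j => by simp only [hS, mul_comm]
  have hfar : ∀ i j, j ∉ insert i (G.neighborFinset i) → S i j = 0 := fun i j hj => by
    have hij : ¬(i = j ∨ G.Adj i j) := by simpa [eq_comm] using hj
    simpa [hS, h0] using (hdep.indepFun_s7 hij).integral_mul_eq_mul_integral
      (h4 i).aestronglyMeasurable (h4 j).aestronglyMeasurable
  calc Matrix.trace (S ^ 2) = ∑ i, ∑ j, S i j ^ 2 := by
        simp only [sq, Matrix.trace, Matrix.diag_apply, Matrix.mul_apply, hsymm]
    _ = ∑ i, ∑ j ∈ insert i (G.neighborFinset i), S i j ^ 2 :=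
        Finset.sum_congr rfl fun i _ => (Finset.sum_subset (Finset.subset_univ _)
          fun j _ hj => by rw [hfar i j hj, sq, zero_mul]).symm
    _ ≤ ∑ i, ∑ j ∈ insert i (G.neighborFinset i),
          (∫ ω, X i ω ^ 4 ∂P + ∫ ω, X j ω ^ 4 ∂P) / 2 := by
        gcongr with i _ j
        rw [hS]
        exact sq_integral_mul_le_of_memLp_four (h4 i) (h4 j)
    _ ≤ _ := G.sum_sum_closedNeighborhood_le hΔ fun i => integral_nonneg fun ω => by positivity

theorem stmt7 {Ω : Type*} [MeasurableSpace Ω] (P : Measure Ω) [IsProbabilityMeasure P]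
    {p : ℕ} (G : SimpleGraph (Fin p)) [DecidableRel G.Adj] (X : Fin p → Ω → ℝ)
    (hdep : GraphDependent P G X)
    (hmeas : ∀ i, Measurable (X i))
    (h4 : ∀ i, MemLp (X i) 4 P)
    (h0 : ∀ i, ∫ ω, X i ω ∂P = 0)
    (S : Matrix (Fin p) (Fin p) ℝ)
    (hS : ∀ i j, S i j = ∫ ω, X i ω * X j ω ∂P)
    (Δ : ℕ) (hΔ : ∀ v, G.degree v ≤ Δ) :
    Matrix.trace (S ^ 2) ≤ ((Δ : ℝ) + 1) * ∑ i, ∫ ω, X i ω ^ 4 ∂P :=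
  stmt7_general P G X hdep h4 h0 S hS Δ hΔ
end

section
/- Let G be a graph on V = {1,…,p} with a d-dominating set 𝒱, let x ∈ ℝ^p, and let A = (a_{ij}) be a symmetric matrix with spectral norm ‖A‖. Define Å by å_{ij} = a_{ij} if i, j ∈ B₂(v) for some v ∈ 𝒱 and å_{ij} = 0 otherwise. Then |xᵀÅx| ≤ (2^d − 1)·‖A‖·xᵀx. -/
open MeasureTheory ProbabilityTheory Matrix Filter
open scoped BigOperators

/-!
Let `N i` be the set of centres `v ∈ 𝒱` with `i ∈ B₂(v)`, so that `Å i j = [N i ∩ N j ≠ ∅] • A i j`.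
By inclusion–exclusion, `[W ≠ ∅] = ∑_{∅ ≠ S ⊆ W} (-1)^(|S|+1)`, hence
`xᵀ Å x = ∑_{S ≠ ∅} (-1)^(|S|+1) y_Sᵀ A y_S`, where `y_S` is `x` restricted to the indices `i`
with `S ⊆ N i`, i.e. to a principal submatrix indexed by an intersection of balls. Each term is
at most `‖A‖ ‖y_S‖²`, and `x_i²` occurs in `∑_S ‖y_S‖²` exactly `2^|N i| - 1 ≤ 2^d - 1` times.
-/

open Finset
open scoped RealInnerProductSpace

theorem abs_dotProduct_mulVec_le_specNorm {p : ℕ} (A : Matrix (Fin p) (Fin p) ℝ)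
    (y : Fin p → ℝ) : |y ⬝ᵥ A *ᵥ y| ≤ specNorm A * (y ⬝ᵥ y) := by
  set Y : EuclideanSpace ℝ (Fin p) := WithLp.toLp 2 y
  have hY : y ⬝ᵥ y = ‖Y‖ ^ 2 := by
    rw [← real_inner_self_eq_norm_sq, EuclideanSpace.inner_toLp_toLp, star_trivial]
  calc |y ⬝ᵥ A *ᵥ y| = |⟪Y, toEuclideanCLM (𝕜 := ℝ) A Y⟫| := by
        rw [inner_toEuclideanCLM]
    _ ≤ ‖Y‖ * ‖toEuclideanCLM (𝕜 := ℝ) A Y‖ := abs_real_inner_le_norm _ _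
    _ ≤ ‖Y‖ * (specNorm A * ‖Y‖) := by gcongr; exact (toEuclideanCLM (𝕜 := ℝ) A).le_opNorm Y
    _ = specNorm A * (y ⬝ᵥ y) := by rw [hY]; ring

theorem sum_powerset_erase_empty_neg_one_pow_card_succ {κ R : Type*} [DecidableEq κ] [CommRing R]
    (W : Finset κ) :
    ∑ S ∈ W.powerset.erase ∅, (-1 : R) ^ (#S + 1) = if W.Nonempty then 1 else 0 := by
  have h := congrArg (Int.cast : ℤ → R) (sum_powerset_neg_one_pow_card (x := W))
  push_cast at h
  rw [sum_erase_eq_sub (empty_mem_powerset W)]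
  simp only [pow_succ, ← sum_mul, h]
  rcases W.eq_empty_or_nonempty with rfl | hW
  · simp
  · simp [hW, hW.ne_empty]

section OverlapMask

variable {ι κ R : Type*} [Fintype ι] [Fintype κ] [DecidableEq κ]

theorem filter_subset_univ_erase_empty (W : Finset κ) :
    {S ∈ (univ : Finset (Finset κ)).erase ∅ | S ⊆ W} = W.powerset.erase ∅ := by
  ext S
  simp [and_comm]

def overlapMask [Zero R] (N : ι → Finset κ) (A : Matrix ι ι R) : Matrix ι ι R :=
  Matrix.of fun i j => if (N i ∩ N j).Nonempty then A i j else 0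

theorem dotProduct_overlapMask_mulVec [CommRing R] (N : ι → Finset κ) (A : Matrix ι ι R)
    (x : ι → R) :
    x ⬝ᵥ overlapMask N A *ᵥ x = ∑ S ∈ (univ : Finset (Finset κ)).erase ∅,
      (-1 : R) ^ (#S + 1) * ({i | S ⊆ N i}.indicator x ⬝ᵥ A *ᵥ {i | S ⊆ N i}.indicator x) := by
  have entry : ∀ i j, x i * ((if (N i ∩ N j).Nonempty then A i j else 0) * x j) =
      ∑ S ∈ (univ : Finset (Finset κ)).erase ∅, (-1 : R) ^ (#S + 1) *
        ({i | S ⊆ N i}.indicator x i * (A i j * {i | S ⊆ N i}.indicator x j)) := by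
    intro i j
    calc _ = (∑ S ∈ (N i ∩ N j).powerset.erase ∅, (-1 : R) ^ (#S + 1)) * (x i * (A i j * x j)) := by
          rw [sum_powerset_erase_empty_neg_one_pow_card_succ]
          split_ifs <;> ring
      _ = ∑ S ∈ (univ : Finset (Finset κ)).erase ∅ with S ⊆ N i ∩ N j,
            (-1 : R) ^ (#S + 1) * (x i * (A i j * x j)) := by
          rw [filter_subset_univ_erase_empty, sum_mul]
      _ = _ := by
          rw [sum_filter]
          refine sum_congr rfl fun S _ => ?_
          simp only [Set.indicator_apply, Set.mem_ofPred_eq, subset_inter_iff]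
          split_ifs <;> simp_all
  simp only [dotProduct, mulVec, overlapMask, of_apply, mul_sum, entry]
  exact (sum_congr rfl fun i _ => sum_comm).trans sum_comm

theorem sum_dotProduct_indicator_self [CommRing R] (N : ι → Finset κ) (x : ι → R) :
    ∑ S ∈ (univ : Finset (Finset κ)).erase ∅,
        {i | S ⊆ N i}.indicator x ⬝ᵥ {i | S ⊆ N i}.indicator x =
      ∑ i, ((2 : R) ^ #(N i) - 1) * (x i * x i) := by
  simp only [dotProduct]
  rw [sum_comm]
  refine sum_congr rfl fun i _ => ?_
  have hcard : (#((N i).powerset.erase ∅) : R) = 2 ^ #(N i) - 1 := by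
    rw [card_erase_of_mem (empty_mem_powerset _), card_powerset,
      Nat.cast_sub Nat.one_le_two_pow]
    push_cast
    rfl
  have hterm : ∀ S : Finset κ, {i | S ⊆ N i}.indicator x i * {i | S ⊆ N i}.indicator x i =
      if S ⊆ N i then x i * x i else 0 := by
    intro S
    simp only [Set.indicator_apply, Set.mem_ofPred_eq]
    split_ifs <;> simp
  rw [sum_congr rfl fun S _ => hterm S, ← sum_filter, sum_const, nsmul_eq_mul,
    filter_subset_univ_erase_empty, hcard]

theorem abs_dotProduct_overlapMask_mulVec_le {p d : ℕ} (N : Fin p → Finset κ)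
    (hN : ∀ i, #(N i) ≤ d) (A : Matrix (Fin p) (Fin p) ℝ) (x : Fin p → ℝ) :
    |x ⬝ᵥ overlapMask N A *ᵥ x| ≤ (2 ^ d - 1) * specNorm A * (x ⬝ᵥ x) := by
  rw [dotProduct_overlapMask_mulVec]
  calc _ ≤ ∑ S ∈ (univ : Finset (Finset κ)).erase ∅,
        specNorm A * ({i | S ⊆ N i}.indicator x ⬝ᵥ {i | S ⊆ N i}.indicator x) := by
        refine (abs_sum_le_sum_abs _ _).trans (sum_le_sum fun S _ => ?_)
        rw [abs_mul, abs_pow, abs_neg, abs_one, one_pow, one_mul]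
        exact abs_dotProduct_mulVec_le_specNorm A _
    _ = specNorm A * ∑ i, (2 ^ #(N i) - 1) * (x i * x i) := by
        rw [← mul_sum, sum_dotProduct_indicator_self]
    _ ≤ specNorm A * ∑ i, (2 ^ d - 1) * (x i * x i) := by
        gcongr ?_ * ∑ i, ?_ * _ with i
        · exact norm_nonneg _
        · exact mul_self_nonneg _
        · exact sub_le_sub_right (pow_le_pow_right₀ one_le_two (hN i)) 1
    _ = _ := by
        rw [← mul_sum]
        simp only [dotProduct]
        ring

end OverlapMask

theorem stmt11_general {p d : ℕ} (G : SimpleGraph (Fin p)) (𝒱 : Set (Fin p))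
    (h𝒱 : IsDomSet G d 𝒱) (x : Fin p → ℝ) (A Ar : Matrix (Fin p) (Fin p) ℝ)
    (h1 : ∀ i j, (∃ v ∈ 𝒱, G.edist i v ≤ 2 ∧ G.edist j v ≤ 2) → Ar i j = A i j)
    (h2 : ∀ i j, ¬ (∃ v ∈ 𝒱, G.edist i v ≤ 2 ∧ G.edist j v ≤ 2) → Ar i j = 0) :
    |x ⬝ᵥ Ar.mulVec x| ≤ ((2 : ℝ) ^ d - 1) * specNorm A * (x ⬝ᵥ x) := by
  classical
  let centres : Fin p → Finset (Fin p) := fun i => {v | v ∈ 𝒱 ∧ G.edist i v ≤ 2}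
  have hoverlap : ∀ i j, (centres i ∩ centres j).Nonempty ↔
      ∃ v ∈ 𝒱, G.edist i v ≤ 2 ∧ G.edist j v ≤ 2 := fun i j => by
    simp only [centres, Finset.Nonempty, mem_inter, mem_filter, mem_univ, true_and]
    exact exists_congr fun v => by tauto
  have hAr : Ar = overlapMask centres A := by
    ext i j
    simp only [overlapMask, of_apply, hoverlap]
    split_ifs with h
    exacts [h1 i j h, h2 i j h]
  have hcard : ∀ i, #(centres i) ≤ d := fun i => by
    refine le_trans ?_ (h𝒱.2 i)
    rw [← Set.ncard_coe_finset]
    refine Set.ncard_le_ncard (fun v hv => ?_) (Set.toFinite _)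
    simp only [centres, coe_filter, mem_univ, true_and, Set.mem_ofPred_eq] at hv
    exact ⟨hv.1, hv.2.trans (by norm_num)⟩
  rw [hAr]
  exact abs_dotProduct_overlapMask_mulVec_le centres hcard A x

theorem stmt11 {p d : ℕ} (G : SimpleGraph (Fin p)) (𝒱 : Set (Fin p))
    (h𝒱 : IsDomSet G d 𝒱) (x : Fin p → ℝ) (A Ar : Matrix (Fin p) (Fin p) ℝ)
    (hA : A.IsSymm)
    (h1 : ∀ i j, (∃ v ∈ 𝒱, G.edist i v ≤ 2 ∧ G.edist j v ≤ 2) → Ar i j = A i j)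
    (h2 : ∀ i j, ¬ (∃ v ∈ 𝒱, G.edist i v ≤ 2 ∧ G.edist j v ≤ 2) → Ar i j = 0) :
    |x ⬝ᵥ Ar.mulVec x| ≤ ((2 : ℝ) ^ d - 1) * specNorm A * (x ⬝ᵥ x) :=
  stmt11_general G 𝒱 h𝒱 x A Ar h1 h2
end

section
/- Let G be a graph on V = {1,…,p} with a d-dominating set 𝒱 and maximum degree Δ. Define a graph Γ on vertex set 𝒱 with an edge between u, v ∈ 𝒱 whenever the balls B₂(u) and B₂(v) are adjacent vertex sets in G (some pair of vertices at distance ≤ 1). Then the maximum degree of Γ is at most d³, and consequently Γ admits a proper vertex coloring with at most d³ + 1 colors. -/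
open MeasureTheory ProbabilityTheory Matrix Filter
open scoped BigOperators

/-
If `B₂(u)` and `B₂(v)` touch at vertices `i, j` with `d(i, j) ≤ 1`, then dominators `w` of `i` and
`r` of `j` give a chain `u, w, r, v` in `𝒱` with consecutive distances at most `3`. Hence every
`Γ`-neighbour of `u` is reached by three such hops, each with at most `d` choices. A greedy
colouring of a graph of maximum degree `d³` uses at most `d³ + 1` colours.
-/

theorem Set.Finite.ncard_biUnion_le_mul {ι α : Type*} {t : Set ι} (ht : t.Finite) {s : ι → Set α}
    {m : ℕ} (h : ∀ i ∈ t, (s i).ncard ≤ m) : (⋃ i ∈ t, s i).ncard ≤ t.ncard * m := by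
  lift t to Finset ι using ht
  simp only [Finset.mem_coe, Set.ncard_coe_finset] at h ⊢
  calc (⋃ i ∈ t, s i).ncard ≤ ∑ i ∈ t, (s i).ncard := t.set_ncard_biUnion_le s
    _ ≤ t.card * m := by simpa using Finset.sum_le_card_nsmul t _ m h

namespace SimpleGraph

variable {V : Type*}

def nearby (G : SimpleGraph V) (D : Set V) (n : ℕ∞) (x : V) : Set V := {y ∈ D | G.edist x y ≤ n}

variable {G : SimpleGraph V}

section Coloring

variable {k : ℕ}

theorem exists_color_notMem_image_neighborSet [Finite V] (h : ∀ v, (G.neighborSet v).ncard ≤ k)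
    (c : V → Fin (k + 1)) (a : V) : ∃ x, x ∉ c '' G.neighborSet a := by
  by_contra! hall
  have hk : (c '' G.neighborSet a).ncard ≤ k := (Set.ncard_image_le (Set.toFinite _)).trans (h a)
  rw [Set.eq_univ_of_forall hall, Set.ncard_univ, Nat.card_eq_fintype_card, Fintype.card_fin] at hk
  omega

theorem exists_finset_coloring [Finite V] (h : ∀ v, (G.neighborSet v).ncard ≤ k)
    (s : Finset V) : ∃ c : V → Fin (k + 1), ∀ u ∈ s, ∀ v ∈ s, G.Adj u v → c u ≠ c v := by
  classical
  induction s using Finset.induction_on with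
  | empty => exact ⟨fun _ => 0, by simp⟩
  | insert a s _ ih =>
    obtain ⟨c, hc⟩ := ih
    obtain ⟨x, hx⟩ := exists_color_notMem_image_neighborSet h c a
    have hfresh : ∀ v, G.Adj a v → c v ≠ x := fun v hv hcv => hx ⟨v, hv, hcv⟩
    refine ⟨Function.update c a x, ?_⟩
    intro u hu v hv huv
    simp only [Finset.mem_insert] at hu hv
    rcases eq_or_ne u a with rfl | hua
    · simpa [huv.ne'] using (hfresh v huv).symm
    rcases eq_or_ne v a with rfl | hva
    · simpa [hua] using hfresh u huv.symm
    simpa [hua, hva] using hc u (hu.resolve_left hua) v (hv.resolve_left hva) huv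

theorem colorable_succ_of_forall_ncard_neighborSet_le [Finite V]
    (h : ∀ v, (G.neighborSet v).ncard ≤ k) : G.Colorable (k + 1) := by
  have := Fintype.ofFinite V
  obtain ⟨c, hc⟩ := exists_finset_coloring h Finset.univ
  exact ⟨Coloring.mk c fun huv => hc _ (Finset.mem_univ _) _ (Finset.mem_univ _) huv⟩

end Coloring

variable {D : Set V} {n : ℕ∞}

theorem ncard_biUnion_nearby_nearby_le [Finite V] {d : ℕ} (hd : ∀ x, (G.nearby D n x).ncard ≤ d)
    (u : V) :
    (⋃ w ∈ G.nearby D n u, ⋃ r ∈ G.nearby D n w, G.nearby D n r).ncard ≤ d ^ 3 :=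
  calc _ ≤ (G.nearby D n u).ncard * (d * d) :=
        (Set.toFinite _).ncard_biUnion_le_mul fun w _ =>
          ((Set.toFinite _).ncard_biUnion_le_mul fun r _ => hd r).trans
            (Nat.mul_le_mul_right d (hd w))
    _ ≤ d * (d * d) := Nat.mul_le_mul_right _ (hd u)
    _ = d ^ 3 := by ring

theorem exists_mem_edist_le_one (hD : ∀ x ∉ D, ∃ w ∈ D, G.Adj x w) (x : V) :
    ∃ w ∈ D, G.edist x w ≤ 1 := by
  by_cases hx : x ∈ D
  · exact ⟨x, hx, by simp⟩
  · obtain ⟨w, hw, hxw⟩ := hD x hx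
    exact ⟨w, hw, (edist_eq_one_iff_adj.2 hxw).le⟩

theorem mem_biUnion_nearby_nearby_of_edist_le (hD : ∀ x ∉ D, ∃ w ∈ D, G.Adj x w) {u v i j : V}
    (hv : v ∈ D) (hi : G.edist i u ≤ 2) (hj : G.edist j v ≤ 2) (hij : i = j ∨ G.Adj i j) :
    v ∈ ⋃ w ∈ G.nearby D 3 u, ⋃ r ∈ G.nearby D 3 w, G.nearby D 3 r := by
  obtain ⟨w, hwD, hiw⟩ := exists_mem_edist_le_one hD i
  obtain ⟨r, hrD, hjr⟩ := exists_mem_edist_le_one hD j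
  have hij : G.edist i j ≤ 1 := edist_le_one_iff_adj_or_eq.2 hij.symm
  simp only [Set.mem_iUnion]
  refine ⟨w, ⟨hwD, ?_⟩, r, ⟨hrD, ?_⟩, hv, ?_⟩
  · calc G.edist u w ≤ G.edist u i + G.edist i w := G.edist_triangle
      _ ≤ 2 + 1 := by rw [edist_comm]; gcongr
      _ = 3 := by norm_num
  · calc G.edist w r ≤ G.edist w i + (G.edist i j + G.edist j r) :=
          G.edist_triangle.trans (by gcongr; exact G.edist_triangle)
      _ ≤ 1 + (1 + 1) := by rw [edist_comm]; gcongr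
      _ = 3 := by norm_num
  · calc G.edist r v ≤ G.edist r j + G.edist j v := G.edist_triangle
      _ ≤ 1 + 2 := by rw [edist_comm]; gcongr
      _ = 3 := by norm_num

end SimpleGraph

theorem stmt19 {p d : ℕ} (G : SimpleGraph (Fin p)) (𝒱 : Set (Fin p))
    (h𝒱 : IsDomSet G d 𝒱) (Γ : SimpleGraph 𝒱)
    (hΓ : ∀ u v : 𝒱, Γ.Adj u v ↔ u ≠ v ∧
      ∃ i j : Fin p, G.edist i ↑u ≤ 2 ∧ G.edist j ↑v ≤ 2 ∧ (i = j ∨ G.Adj i j)) :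
    (∀ v : 𝒱, {u | Γ.Adj v u}.ncard ≤ d ^ 3) ∧ Γ.Colorable (d ^ 3 + 1) := by
  have hdeg : ∀ v : 𝒱, {u | Γ.Adj v u}.ncard ≤ d ^ 3 := by
    intro v
    have hsub : Subtype.val '' {u | Γ.Adj v u} ⊆
        ⋃ w ∈ G.nearby 𝒱 3 v, ⋃ r ∈ G.nearby 𝒱 3 w, G.nearby 𝒱 3 r := by
      rintro _ ⟨u, hu, rfl⟩
      obtain ⟨-, i, j, hi, hj, hij⟩ := (hΓ v u).1 hu
      exact SimpleGraph.mem_biUnion_nearby_nearby_of_edist_le h𝒱.1 u.2 hi hj hij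
    calc {u | Γ.Adj v u}.ncard = (Subtype.val '' {u | Γ.Adj v u}).ncard :=
          (Set.ncard_image_of_injective _ Subtype.val_injective).symm
      _ ≤ _ := Set.ncard_le_ncard hsub (Set.toFinite _)
      _ ≤ d ^ 3 := SimpleGraph.ncard_biUnion_nearby_nearby_le h𝒱.2 v
  exact ⟨hdeg, SimpleGraph.colorable_succ_of_forall_ncard_neighborSet_le hdeg⟩
end
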